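/- Let a, M be positive integers, let I_g, I_h ⊂ ℤ be finite integer intervals of lengths L_g and L_h with I_g ∩ I_h ≠ ∅, and let g, h ∈ ℓ²(ℤ) with supp(g) ⊆ I_g, supp(h) ⊆ I_h. Let L be a positive integer with L > L_g + L_h, a | L and M | L, and let g_fin, h_fin ∈ ℂ^L be the periodizations of g and h. Then g and h satisfy the Wexler–Raz equations on ℓ²(ℤ) for parameters a, M if and only if g_fin and h_fin satisfy the Wexler–Raz equations on ℂ^L for parameters a, M. -/

import Mathlib

/-! Both sides are statements about the coefficients `⟨h, M_{m/a} T_t g⟩` at shifts `t ∈ Mℤ`.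
By the support assumptions these vanish unless `t` lies in the window `[ah - bg, bh - ag]`,
which contains `0` and has fewer than `L` points. For a shift `t` with no other representative
of `t mod L` in the window, periodization loses nothing: the `ℂ^L` coefficient at `t mod L` equals
the `ℓ²(ℤ)` coefficient at `t`. Writing `t = nM`, the `n` in the window are thus in bijection
with `ℤ/(L/M)`, with matching coefficients, `0 ↦ 0`, and zero coefficients elsewhere, so the two
families of delta conditions are equivalent. -/

/-- Periodization of a (finitely supported) sequence `g : ℤ → ℂ` onto `ℂ^L`,
identified with functions on `ZMod L`: `g_fin[l] = ∑_{k ∈ ℤ} g[l - kL]`. -/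
noncomputable def periodize (L : ℕ) [NeZero L] (g : ℤ → ℂ) : ZMod L → ℂ :=
  fun l => ∑' k : ℤ, g ((l.val : ℤ) - k * (L : ℤ))

/-- The Wexler–Raz equations on `ℓ²(ℤ)` for the pair `(g, h)` and parameters `a, M`:
`(M/a)·⟨h, M_{m/a} T_{nM} g⟩ = δ[n]δ[m]` for all `m = 0,…,a-1` and `n ∈ ℤ`. -/
noncomputable def WexlerRazZ (a M : ℕ) (g h : ℤ → ℂ) : Prop :=
  ∀ m : ℕ, m < a → ∀ n : ℤ,
    (M : ℂ) / (a : ℂ) *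
      ∑' l : ℤ, h l * star (g (l - n * (M : ℤ)) *
        Complex.exp (2 * Real.pi * Complex.I * (m : ℂ) * (l : ℂ) / (a : ℂ))) =
      if n = 0 ∧ m = 0 then 1 else 0

/-- The Wexler–Raz equations on `ℂ^L` for the pair `(g, h)` and parameters `a, M`
(with `a ∣ L`, `M ∣ L`), using circular translation:
`(M/a)·⟨h, e^{2πim·/a}·T_{nM} g⟩_{ℂ^L} = δ[n]δ[m]` for `m = 0,…,a-1`, `n = 0,…,L/M-1`. -/
noncomputable def WexlerRazFin (L a M : ℕ) [NeZero L] (g h : ZMod L → ℂ) : Prop :=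
  ∀ m : ℕ, m < a → ∀ n : ℕ, n < L / M →
    (M : ℂ) / (a : ℂ) *
      ∑ l : ZMod L, h l *
        star (Complex.exp (2 * Real.pi * Complex.I * (m : ℂ) * (l.val : ℂ) / (a : ℂ)) *
          g (l - ((n * M : ℕ) : ZMod L))) =
      if n = 0 ∧ m = 0 then 1 else 0

/-- `⟨h, M_{m/a} T_t g⟩_{ℓ²(ℤ)}`, the short-time Fourier transform `V_g h (t, m/a)`. -/
noncomputable def stft (a m : ℕ) (g h : ℤ → ℂ) (t : ℤ) : ℂ :=
  ∑' l : ℤ, h l * star (g (l - t) *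
    Complex.exp (2 * Real.pi * Complex.I * (m : ℂ) * (l : ℂ) / (a : ℂ)))

noncomputable def stftZMod (L a m : ℕ) [NeZero L] (g h : ZMod L → ℂ) (ν : ZMod L) : ℂ :=
  ∑ l : ZMod L, h l *
    star (Complex.exp (2 * Real.pi * Complex.I * (m : ℂ) * (l.val : ℂ) / (a : ℂ)) * g (l - ν))

theorem Int.eq_of_modEq_of_mem_Ico {N : ℕ} {d x y : ℤ} (hx : x ∈ Set.Ico d (d + N))
    (hy : y ∈ Set.Ico d (d + N)) (hxy : x ≡ y [ZMOD N]) : x = y := by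
  rw [Set.mem_Ico] at hx hy
  have := Int.eq_zero_of_abs_lt_dvd hxy.dvd (abs_lt.2 ⟨by omega, by omega⟩)
  omega

theorem Int.eq_zero_of_add_mul_mem_Ico {N : ℕ} {d n j : ℤ} (hn : n ∈ Set.Ico d (d + N))
    (hnj : n + j * N ∈ Set.Ico d (d + N)) : j = 0 := by
  have hN : (N : ℤ) ≠ 0 := by rw [Set.mem_Ico] at hn; omega
  have := Int.eq_of_modEq_of_mem_Ico hnj hn (Int.modEq_iff_dvd.2 ⟨-j, by ring⟩)
  exact (mul_eq_zero.1 (by linarith)).resolve_right hN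

theorem exp_div_eq_of_modEq {a L : ℕ} (haL : a ∣ L) (m : ℕ) {x y : ℤ} (hxy : x ≡ y [ZMOD L]) :
    Complex.exp (2 * Real.pi * Complex.I * m * x / a) =
      Complex.exp (2 * Real.pi * Complex.I * m * y / a) := by
  obtain ⟨k, hk⟩ := (hxy.of_dvd (Int.natCast_dvd_natCast.2 haL)).dvd
  rcases eq_or_ne a 0 with rfl | ha
  · simp
  rw [Complex.exp_eq_exp_iff_exists_int]
  refine ⟨-(m * k), ?_⟩
  have hy : (y : ℂ) = x + a * k := by exact_mod_cast (by omega : y = x + a * k)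
  rw [hy]
  field_simp
  push_cast
  ring

section periodize

variable {L : ℕ} [NeZero L]

theorem periodize_intCast {g : ℤ → ℂ} {t : ℤ} (hg : ∀ k ≠ 0, g (t - k * L) = 0) :
    periodize L g t = g t := by
  have hval : (((t : ZMod L).val : ℤ)) = t - (t / L) * L := by
    rw [ZMod.val_intCast, Int.emod_def]; ring
  rw [periodize, tsum_eq_single (-(t / L)) fun k hk => ?_]
  · rw [hval]; ring_nf
  · rw [hval, show t - t / L * L - k * L = t - (t / L + k) * L by ring]
    exact hg _ (by omega)

theorem periodize_eq_zero {g : ℤ → ℂ} {x : ZMod L} (hg : ∀ k : ℤ, g (x.val - k * L) = 0) :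
    periodize L g x = 0 := by
  simp only [periodize, hg, tsum_zero]

theorem sum_periodize_mul {h : ℤ → ℂ} {ah bh : ℤ} (hh : ∀ l, h l ≠ 0 → l ∈ Finset.Icc ah bh)
    (hwidth : bh - ah < L) (F : ZMod L → ℂ) :
    ∑ x : ZMod L, periodize L h x * F x = ∑ l ∈ Finset.Icc ah bh, h l * F l := by
  have hIco : ∀ l ∈ Finset.Icc ah bh, l ∈ Set.Ico ah (ah + L) := fun l hl => by
    rw [Finset.mem_Icc] at hl; rw [Set.mem_Ico]; omega
  rw [← Finset.sum_subset (Finset.subset_univ ((Finset.Icc ah bh).image ((↑) : ℤ → ZMod L))),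
    Finset.sum_image]
  · refine Finset.sum_congr rfl fun l hl => ?_
    rw [periodize_intCast fun k hk => ?_]
    by_contra hne
    have := Int.eq_of_modEq_of_mem_Ico (hIco _ (hh _ hne)) (hIco _ hl)
      (Int.modEq_iff_dvd.2 ⟨k, by ring⟩)
    exact hk (by simpa [NeZero.ne L] using this)
  · intro l₁ hl₁ l₂ hl₂ heq
    exact Int.eq_of_modEq_of_mem_Ico (hIco _ hl₁) (hIco _ hl₂)
      ((ZMod.intCast_eq_intCast_iff _ _ _).1 heq)
  · intro x _ hx
    rw [periodize_eq_zero fun k => ?_, zero_mul]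
    by_contra hne
    exact hx (Finset.mem_image.2 ⟨_, hh _ hne, by simp⟩)

end periodize

section window

variable {g h : ℤ → ℂ} {ag bg ah bh : ℤ} (hg : ∀ l, g l ≠ 0 → l ∈ Finset.Icc ag bg)
  (hh : ∀ l, h l ≠ 0 → l ∈ Finset.Icc ah bh)
include hg hh

theorem stft_eq_zero_of_notMem (a m : ℕ) {t : ℤ} (ht : t ∉ Set.Icc (ah - bg) (bh - ag)) :
    stft a m g h t = 0 := by
  refine (tsum_congr fun l => ?_).trans tsum_zero
  by_cases hl : h l = 0
  · rw [hl, zero_mul]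
  by_cases hlt : g (l - t) = 0
  · rw [hlt, zero_mul, star_zero, mul_zero]
  have hl' := Finset.mem_Icc.1 (hh l hl)
  have hlt' := Finset.mem_Icc.1 (hg _ hlt)
  exact absurd ⟨by omega, by omega⟩ ht

theorem stftZMod_periodize_intCast {L a : ℕ} [NeZero L] (haL : a ∣ L) (hwidth : bh - ah < L)
    (m : ℕ) {t : ℤ} (ht : ∀ k ≠ 0, t + k * L ∉ Set.Icc (ah - bg) (bh - ag)) :
    stftZMod L a m (periodize L g) (periodize L h) t = stft a m g h t := by
  rw [stftZMod, sum_periodize_mul hh hwidth, stft,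
    tsum_eq_sum fun l hl => by rw [of_not_not (mt (hh l) hl), zero_mul]]
  refine Finset.sum_congr rfl fun l hl => ?_
  have hphase := exp_div_eq_of_modEq haL m (ZMod.val_intCast (n := L) l ▸ Int.mod_modEq l L)
  push_cast at hphase
  rw [← Int.cast_sub, periodize_intCast fun k hk => ?_, hphase, mul_comm (Complex.exp _)]
  by_contra hne
  have hl' := Finset.mem_Icc.1 hl
  have hne' := Finset.mem_Icc.1 (hg _ hne)
  exact ht k hk ⟨by omega, by omega⟩

end window

theorem Int.exists_Ico_of_mul_mem_Icc {M N : ℕ} (hM : 0 < M) {u v : ℤ} (huv : v - u < N * M) :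
    ∃ d : ℤ, ∀ n : ℤ, n * M ∈ Set.Icc u v → n ∈ Set.Ico d (d + N) := by
  -- `-(-u / M) = ⌈u / M⌉` is the least `n` with `u ≤ n * M`
  refine ⟨-(-u / M), fun n hn => ?_⟩
  rw [Set.mem_Icc] at hn
  have hM' : (0 : ℤ) < M := by exact_mod_cast hM
  have hdiv := Int.ediv_mul_le (-u) hM'.ne'
  have hle : -n ≤ -u / M := Int.le_ediv_of_mul_le hM' (by linarith)
  refine Set.mem_Ico.2 ⟨by omega, lt_of_mul_lt_mul_right ?_ hM'.le⟩
  nlinarith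

theorem forall_int_eq_ite_iff_forall_lt {α : Type*} [Zero α] {N : ℕ} {d : ℤ}
    (h0 : (0 : ℤ) ∈ Set.Ico d (d + N)) {f : ℤ → α} {F : ℕ → α}
    (hf : ∀ n ∉ Set.Ico d (d + N), f n = 0)
    (hF : ∀ n ∈ Set.Ico d (d + N), ∀ k < N, (k : ℤ) ≡ n [ZMOD N] → F k = f n) (v : α) :
    (∀ n : ℤ, f n = if n = 0 then v else 0) ↔ ∀ k < N, F k = if k = 0 then v else 0 := by
  have hN : (0 : ℤ) < N := by rw [Set.mem_Ico] at h0; omega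
  have hzero : ∀ n ∈ Set.Ico d (d + N), ∀ k < N, (k : ℤ) ≡ n [ZMOD N] → (n = 0 ↔ k = 0) := by
    intro n hn k hk hkn
    have hwin : ∀ j < N, (j : ℤ) ∈ Set.Ico (0 : ℤ) (0 + N) := fun j hj => by
      rw [Set.mem_Ico]; omega
    constructor
    · rintro rfl
      exact_mod_cast Int.eq_of_modEq_of_mem_Ico (hwin k hk) (hwin 0 (by omega)) hkn
    · rintro rfl
      exact Int.eq_of_modEq_of_mem_Ico hn h0 (by simpa using hkn.symm)
  constructor
  · intro hfv k hk
    have hn : d + (k - d) % N ∈ Set.Ico d (d + N) := by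
      have := Int.emod_nonneg (k - d) hN.ne'
      have := Int.emod_lt_of_pos (k - d) hN
      rw [Set.mem_Ico]; omega
    have hkn : (k : ℤ) ≡ d + (k - d) % N [ZMOD N] := by
      simpa using ((Int.mod_modEq (k - d) N).add_left d).symm
    rw [hF _ hn k hk hkn, hfv, if_congr (hzero _ hn k hk hkn) rfl rfl]
  · intro hFv n
    by_cases hn : n ∈ Set.Ico d (d + N)
    · have hk : ((n % N).toNat : ℤ) = n % N := Int.toNat_of_nonneg (Int.emod_nonneg n hN.ne')
      have hkN : (n % N).toNat < N := by have := Int.emod_lt_of_pos n hN; omega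
      have hkn : ((n % N).toNat : ℤ) ≡ n [ZMOD N] := hk ▸ Int.mod_modEq n N
      rw [← hF n hn _ hkN hkn, hFv _ hkN, if_congr (hzero n hn _ hkN hkn).symm rfl rfl]
    · rw [hf n hn, if_neg fun (hn0 : n = 0) => hn (hn0 ▸ h0)]

theorem wexler_raz_iff_periodized_general
    (a M L : ℕ) (hM : 0 < M) [NeZero L]
    (haL : a ∣ L) (hML : M ∣ L)
    (ag bg ah bh : ℤ) (Lg Lh : ℕ)
    (hLg : (Finset.Icc ag bg).card = Lg) (hLh : (Finset.Icc ah bh).card = Lh)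
    (hinter : ((Finset.Icc ag bg) ∩ (Finset.Icc ah bh)).Nonempty)
    (hL : Lg + Lh < L)
    (g h : ℤ → ℂ)
    (hgsupp : ∀ l : ℤ, g l ≠ 0 → l ∈ Finset.Icc ag bg)
    (hhsupp : ∀ l : ℤ, h l ≠ 0 → l ∈ Finset.Icc ah bh) :
    WexlerRazZ a M g h ↔ WexlerRazFin L a M (periodize L g) (periodize L h) := by
  obtain ⟨x, hx⟩ := hinter
  rw [Finset.mem_inter, Finset.mem_Icc, Finset.mem_Icc] at hx
  rw [Int.card_Icc] at hLg hLh
  have hNM : ((L / M : ℕ) : ℤ) * M = L := by exact_mod_cast Nat.div_mul_cancel hML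
  obtain ⟨d, hd⟩ := Int.exists_Ico_of_mul_mem_Icc hM (N := L / M) (u := ah - bg) (v := bh - ag)
    (by omega)
  have h0 : (0 : ℤ) ∈ Set.Ico d (d + (L / M : ℕ)) := hd 0 (by rw [Set.mem_Icc]; omega)
  refine forall₂_congr fun m _ => ?_
  simp only [ite_and]
  refine forall_int_eq_ite_iff_forall_lt h0
    (f := fun n => M / a * stft a m g h (n * M))
    (F := fun k => M / a * stftZMod L a m (periodize L g) (periodize L h) ((k * M : ℕ) : ZMod L))
    (fun n hn => ?_) (fun n hn k _ hkn => ?_) _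
  · rw [stft_eq_zero_of_notMem hgsupp hhsupp _ _ (mt (hd n) hn), mul_zero]
  · have hcast : ((k * M : ℕ) : ZMod L) = ((n * M : ℤ) : ZMod L) := by
      have hkn' := hkn.mul_right' (c := M)
      rw [hNM] at hkn'
      exact_mod_cast (ZMod.intCast_eq_intCast_iff _ _ _).2 hkn'
    rw [hcast, stftZMod_periodize_intCast hgsupp hhsupp haL (by omega) m fun j hj hmem => hj ?_]
    exact Int.eq_zero_of_add_mul_mem_Ico hn
      (hd (n + j * (L / M : ℕ)) (by rwa [add_mul, mul_assoc, hNM]))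

/-- for `g`, `h` supported in finite integer intervals of lengths `Lg`, `Lh`
with nonempty intersection, and `L > Lg + Lh` divisible by `a` and `M`, the pair `(g, h)`
satisfies the Wexler–Raz equations on `ℓ²(ℤ)` iff the periodized pair `(g_fin, h_fin)`
satisfies the Wexler–Raz equations on `ℂ^L`. -/
theorem wexler_raz_iff_periodized
    (a M L : ℕ) (ha : 0 < a) (hM : 0 < M) [NeZero L]
    (haL : a ∣ L) (hML : M ∣ L)
    (ag bg ah bh : ℤ) (Lg Lh : ℕ)
    (hLg : (Finset.Icc ag bg).card = Lg) (hLh : (Finset.Icc ah bh).card = Lh)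
    (hinter : ((Finset.Icc ag bg) ∩ (Finset.Icc ah bh)).Nonempty)
    (hL : Lg + Lh < L)
    (g h : ℤ → ℂ)
    (hgsupp : ∀ l : ℤ, g l ≠ 0 → l ∈ Finset.Icc ag bg)
    (hhsupp : ∀ l : ℤ, h l ≠ 0 → l ∈ Finset.Icc ah bh) :
    WexlerRazZ a M g h ↔ WexlerRazFin L a M (periodize L g) (periodize L h) :=
  wexler_raz_iff_periodized_general a M L hM haL hML ag bg ah bh Lg Lh hLg hLh hinter hL g h hgsupp
    hhsupp
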